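/- Conjugating the staggered fermion Hamiltonian H̃_{KS;h} by the decomposition unitary U_h yields an operator H_{KS;h} = U_h H̃_{KS;h} U_h* on ℓ²(2hℤ^d) ⊗ ℂ^Λ whose matrix elements are (H_{KS;h})_{a,b} = (-1)^{s_{j-1}(a)} D^+_{2h;j} if b = a - e_j, (-1)^{s_{j-1}(a)} D^-_{2h;j} if b = a + e_j, and 0 otherwise. -/

import Mathlib

noncomputable section

/-- The `j`-th standard basis vector of `ℤ^d`. -/
def e (d : ℕ) (j : Fin d) : Fin d → ℤ := Pi.single j 1

/-- `s_{j-1}(n)` for `n ∈ ℤ^d`: the sum of entries `n_k` with `k < j` (0-indexed). -/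
def sZ (d : ℕ) (j : Fin d) (n : Fin d → ℤ) : ℤ :=
  ∑ k ∈ Finset.univ.filter (fun k : Fin d => k < j), n k

/-- `s_{j-1}(a)` for `a ∈ Λ = {0,1}^d`. -/
def sL (d : ℕ) (j : Fin d) (a : Fin d → Fin 2) : ℕ :=
  ∑ k ∈ Finset.univ.filter (fun k : Fin d => k < j), (a k : ℕ)

/-- The symmetric difference operator `D^S_{h;j}` on functions on `hℤ^d`. -/
def DS (d : ℕ) (h : ℝ) (j : Fin d) (u : (Fin d → ℤ) → ℂ) : (Fin d → ℤ) → ℂ :=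
  fun n => (1 / (2 * Complex.I * h)) * (u (n + e d j) - u (n - e d j))

/-- The staggered fermion Hamiltonian `H̃_{KS;h}` on `ℓ²(hℤ^d)`. -/
def Ht (d : ℕ) (h : ℝ) (u : (Fin d → ℤ) → ℂ) : (Fin d → ℤ) → ℂ :=
  fun n => ∑ j : Fin d, ((-1 : ℂ) ^ (sZ d j n)) * DS d h j u n

/-- `a ∈ Λ` as an integer vector. -/
def av (d : ℕ) (a : Fin d → Fin 2) : Fin d → ℤ := fun i => ((a i : ℕ) : ℤ)

/-- The decomposition unitary `U_h`, `(U_h u)_a(z) = 2^{-d/2} u(z + h a)`;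
points of `2hℤ^d` are indexed by `m ∈ ℤ^d` (the point `2h•m`). -/
def Uh (d : ℕ) (u : (Fin d → ℤ) → ℂ) : (Fin d → Fin 2) → (Fin d → ℤ) → ℂ :=
  fun a m => (((2 : ℝ) ^ (-(d : ℝ) / 2) : ℝ) : ℂ) * u (2 • m + av d a)

/-- Forward difference `D^+_{2h;j}` on functions on `2hℤ^d` (indexed by `ℤ^d`). -/
def Dp2 (d : ℕ) (h : ℝ) (j : Fin d) (v : (Fin d → ℤ) → ℂ) : (Fin d → ℤ) → ℂ :=
  fun m => (1 / (2 * Complex.I * h)) * (v (m + e d j) - v m)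

/-- Backward difference `D^-_{2h;j}` on functions on `2hℤ^d`. -/
def Dm2 (d : ℕ) (h : ℝ) (j : Fin d) (v : (Fin d → ℤ) → ℂ) : (Fin d → ℤ) → ℂ :=
  fun m => (1 / (2 * Complex.I * h)) * (v m - v (m - e d j))

/-- The operator on `ℓ²(2hℤ^d) ⊗ ℂ^Λ` with matrix elements
`(H_{KS;h})_{a,b} = (-1)^{s_{j-1}(a)} D^+_{2h;j}` if `b = a - e_j`,
`(-1)^{s_{j-1}(a)} D^-_{2h;j}` if `b = a + e_j`, and `0` otherwise. -/
def HKS (d : ℕ) (h : ℝ) (w : (Fin d → Fin 2) → (Fin d → ℤ) → ℂ) :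
    (Fin d → Fin 2) → (Fin d → ℤ) → ℂ :=
  fun a m => ∑ j : Fin d,
    if a j = 1 then
      ((-1 : ℂ) ^ (sL d j a)) * Dp2 d h j (w (Function.update a j 0)) m
    else
      ((-1 : ℂ) ^ (sL d j a)) * Dm2 d h j (w (Function.update a j 1)) m

/-! Write a site of `hℤ^d` as `2m + a` with `a ∈ Λ`. The sign `(-1)^{s_{j-1}(2m + a)}` only
sees parities, so it is `(-1)^{s_{j-1}(a)}`; and the two neighbours `2m + a ± e_j` lie in the
sublattice labelled by `a` with its `j`-th bit flipped: for `a_j = 1` they are `2(m + e_j) + (a - e_j)`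
and `2m + (a - e_j)`, a forward difference, for `a_j = 0` they are `2m + (a + e_j)` and
`2(m - e_j) + (a + e_j)`, a backward one. -/

open Finset Function

section

variable {d : ℕ}

theorem av_update_of_eq_one {a : Fin d → Fin 2} {j : Fin d} (h : a j = 1) :
    av d (update a j 0) = av d a - e d j := by
  funext i
  rcases eq_or_ne i j with rfl | hij
  · simp [av, e, h]
  · simp [av, e, hij]

theorem av_update_of_eq_zero {a : Fin d → Fin 2} {j : Fin d} (h : a j = 0) :
    av d (update a j 1) = av d a + e d j := by
  funext i
  rcases eq_or_ne i j with rfl | hij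
  · simp [av, e, h]
  · simp [av, e, hij]

theorem sZ_add (j : Fin d) (n n' : Fin d → ℤ) : sZ d j (n + n') = sZ d j n + sZ d j n' :=
  sum_add_distrib

theorem sZ_two_smul (j : Fin d) (n : Fin d → ℤ) : sZ d j (2 • n) = 2 * sZ d j n := by
  simp [sZ, mul_sum]

theorem sZ_av (j : Fin d) (a : Fin d → Fin 2) : sZ d j (av d a) = sL d j a := by
  simp [sZ, sL, av]

theorem neg_one_zpow_sZ_two_smul_add_av (j : Fin d) (m : Fin d → ℤ) (a : Fin d → Fin 2) :
    (-1 : ℂ) ^ sZ d j (2 • m + av d a) = (-1 : ℂ) ^ sL d j a := by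
  rw [sZ_add, sZ_two_smul, sZ_av, zpow_add₀ (by norm_num), zpow_mul, zpow_natCast]
  norm_num

end

theorem stmt7_general (d : ℕ) (h : ℝ)
    (u : (Fin d → ℤ) → ℂ) (a : Fin d → Fin 2) (m : Fin d → ℤ) :
    Uh d (Ht d h u) a m = HKS d h (Uh d u) a m := by
  simp only [Uh, Ht, HKS, Dp2, Dm2, DS, mul_sum]
  refine sum_congr rfl fun j _ => ?_
  rw [neg_one_zpow_sZ_two_smul_add_av]
  split_ifs with haj
  · rw [av_update_of_eq_one haj,
      show 2 • (m + e d j) + (av d a - e d j) = 2 • m + av d a + e d j by rw [smul_add]; abel,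
      ← add_sub_assoc]
    ring
  · rw [av_update_of_eq_zero (by omega),
      show 2 • (m - e d j) + (av d a + e d j) = 2 • m + av d a - e d j by rw [smul_sub]; abel,
      ← add_assoc]
    ring

/-- Conjugation of `H̃_{KS;h}` by `U_h` yields the operator with the stated matrix
elements: `U_h H̃_{KS;h} u = H_{KS;h} (U_h u)` for every `u`. -/
theorem stmt7 (d : ℕ) (hd : 1 ≤ d) (h : ℝ) (hh : 0 < h)
    (u : (Fin d → ℤ) → ℂ) (a : Fin d → Fin 2) (m : Fin d → ℤ) :
    Uh d (Ht d h u) a m = HKS d h (Uh d u) a m :=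
  stmt7_general d h u a m
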